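/- Assume the values h_k over slots k with Π(k) ≠ 0 are pairwise distinct, and let (q, p) be a maximizer of Problem (P). Let x be the smallest index in {1,…,|D|+1} such that the energy-causality constraint (ii) holds with equality at i = d_x (such x exists, since equality holds at i = K = d_{|D|+1}). Then, with the conventions h_{d_0} := 1 and q_{d_0} := 0: (a) q_{d_k} = 0 for every k with 1 ≤ k ≤ x − 2; and (b) ∑_{k=1}^{d_x} ∑_{n∈N_k^I} p_{k,n} = ζ·h_{d_{x−1}}·q_{d_{x−1}} + B1. -/

import Mathlib

noncomputable section

/-- The information sub-channel set `N_k^I = {0,…,N} \ {Π(k)}`. -/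
def NI (N : ℕ) (Pi : ℕ → ℕ) (k : ℕ) : Finset ℕ := Finset.Icc 0 N \ {Pi k}

/-- Feasibility for Problem (P) with a single WET sub-channel `Π(k)` per slot. -/
def FeasibleP (K N : ℕ) (h : ℕ → ℕ → ℝ) (Q ζ B1 : ℝ) (Pi : ℕ → ℕ)
    (q : ℕ → ℝ) (p : ℕ → ℕ → ℝ) : Prop :=
  (∀ k ∈ Finset.Icc 1 K, 0 ≤ q k) ∧
  (∀ k ∈ Finset.Icc 1 K, Pi k = 0 → q k = 0) ∧
  (∀ k ∈ Finset.Icc 1 K, ∀ n ∈ NI N Pi k, 0 ≤ p k n) ∧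
  (∑ k ∈ Finset.Icc 1 K, q k ≤ (K : ℝ) * Q) ∧
  (∀ i ∈ Finset.Icc 1 K,
    ∑ k ∈ Finset.Icc 1 i, ∑ n ∈ NI N Pi k, p k n ≤
      ζ * ∑ k ∈ Finset.Icc 1 (i - 1), h k (Pi k) * q k + B1)

/-- Achievable rate for Problem (P). -/
def RateP (K N : ℕ) (g : ℕ → ℕ → ℝ) (Γσ : ℝ) (Pi : ℕ → ℕ) (p : ℕ → ℕ → ℝ) : ℝ :=
  (1 / ((K : ℝ) * N)) * ∑ k ∈ Finset.Icc 1 K, ∑ n ∈ NI N Pi k,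
    Real.logb 2 (1 + g k n * p k n / Γσ)

open Classical in
/-- The set `D` of causally dominating slots. -/
def Dset (K : ℕ) (h : ℕ → ℕ → ℝ) (Pi : ℕ → ℕ) : Finset ℕ :=
  (Finset.Icc 1 (K - 1)).filter
    (fun k => Pi k ≠ 0 ∧ ∀ j, 1 ≤ j → j < k → h j (Pi j) < h k (Pi k))

end


/-!
At an optimum, any change of the WET powers that keeps energy causality in the first `K - 1`
slots and raises the energy harvested before slot `K` is impossible: the surplus could be spent on
an information sub-channel of slot `K` (whose WET sub-channel is the dummy one), strictly raising
the rate. So no WET power can be moved to a stronger slot without breaking causality. Moving it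
from a slot outside `D` to the earlier slot of `D` that beats it never breaks causality, hence only
slots of `D` harvest. While the constraint is slack at `d_{m+1}`, a little power can be moved from
`d_m` to `d_{m+1}` without breaking causality, hence `q_{d_m} = 0` for `m ≤ x - 2`, and up to
`d_x - 1` only the slot `d_{x-1}` harvests.
-/

open Finset

noncomputable section

def consumed (N : ℕ) (Pi : ℕ → ℕ) (p : ℕ → ℕ → ℝ) (i : ℕ) : ℝ :=
  ∑ k ∈ Icc 1 i, ∑ n ∈ NI N Pi k, p k n

def harvested (h : ℕ → ℕ → ℝ) (Pi : ℕ → ℕ) (q : ℕ → ℝ) (i : ℕ) : ℝ :=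
  ∑ k ∈ Icc 1 i, h k (Pi k) * q k

def transfer (q : ℕ → ℝ) (a b : ℕ) (δ : ℝ) (k : ℕ) : ℝ :=
  q k - (if k = a then δ else 0) + (if k = b then δ else 0)

def IsOptimalP (K N : ℕ) (h g : ℕ → ℕ → ℝ) (Q ζ B1 Γσ : ℝ) (Pi : ℕ → ℕ)
    (q : ℕ → ℝ) (p : ℕ → ℕ → ℝ) : Prop :=
  FeasibleP K N h Q ζ B1 Pi q p ∧
    ∀ q' p', FeasibleP K N h Q ζ B1 Pi q' p' → RateP K N g Γσ Pi p' ≤ RateP K N g Γσ Pi p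

end

theorem exists_record_ge {α : Type*} [LinearOrder α] (f : ℕ → α) {j : ℕ} (hj : 1 ≤ j) :
    ∃ r, 1 ≤ r ∧ r ≤ j ∧ f j ≤ f r ∧ ∀ i, 1 ≤ i → i < r → f i < f r := by
  induction j using Nat.strong_induction_on with
  | _ j ih =>
    by_cases hrec : ∀ i, 1 ≤ i → i < j → f i < f j
    · exact ⟨j, hj, le_rfl, le_rfl, hrec⟩
    push Not at hrec
    obtain ⟨i, hi1, hij, hfi⟩ := hrec
    obtain ⟨r, hr1, hri, hfr, hrec⟩ := ih i hij hi1
    exact ⟨r, hr1, hri.trans hij.le, hfi.trans hfr, hrec⟩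

section Enumeration

variable {S : Finset ℕ} {M : ℕ} {d : ℕ → ℕ}

theorem exists_index_of_mem (hd : StrictMonoOn d (Set.Iic (M + 1)))
    (hdsurj : ∀ k ∈ S, ∃ i, 1 ≤ i ∧ i ≤ M ∧ d i = k) {k n : ℕ} (hk : k ∈ S) (hkn : k < d n)
    (hn : n ≤ M + 1) : ∃ i, 1 ≤ i ∧ i < n ∧ d i = k := by
  obtain ⟨i, hi1, hiM, rfl⟩ := hdsurj k hk
  exact ⟨i, hi1, (hd.lt_iff_lt (Set.mem_Iic.2 (by omega)) hn).1 hkn, rfl⟩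

theorem le_or_le_of_mem (hd : StrictMonoOn d (Set.Iic (M + 1)))
    (hdsurj : ∀ k ∈ S, ∃ i, 1 ≤ i ∧ i ≤ M ∧ d i = k) {k m : ℕ} (hk : k ∈ S) (hm : m ≤ M) :
    k ≤ d m ∨ d (m + 1) ≤ k := by
  refine or_iff_not_imp_right.2 fun hkm => ?_
  obtain ⟨i, -, him, rfl⟩ := exists_index_of_mem hd hdsurj hk (not_le.1 hkm) (by omega)
  exact (hd.le_iff_le (Set.mem_Iic.2 (by omega)) (Set.mem_Iic.2 (by omega))).2 (by omega)

end Enumeration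

section Schedule

variable {K N : ℕ} {h g : ℕ → ℕ → ℝ} {Q ζ B1 Γσ : ℝ} {Pi : ℕ → ℕ} {q : ℕ → ℝ}
  {p : ℕ → ℕ → ℝ}

theorem mem_Dset {k : ℕ} : k ∈ Dset K h Pi ↔
    k ∈ Icc 1 (K - 1) ∧ Pi k ≠ 0 ∧ ∀ j, 1 ≤ j → j < k → h j (Pi j) < h k (Pi k) := by
  simp only [Dset, mem_filter]

theorem exists_mem_Dset_ge (hh0 : ∀ k, h k 0 = 0) {j : ℕ} (hj : j ∈ Icc 1 (K - 1))
    (hpos : 0 < h j (Pi j)) : ∃ r ∈ Dset K h Pi, r ≤ j ∧ h j (Pi j) ≤ h r (Pi r) := by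
  obtain ⟨r, hr1, hrj, hjr, hrec⟩ := exists_record_ge (fun k => h k (Pi k)) (mem_Icc.1 hj).1
  refine ⟨r, mem_Dset.2 ⟨?_, fun h0 => ?_, hrec⟩, hrj, hjr⟩
  · simp only [mem_Icc] at hj ⊢
    omega
  · simp only [h0, hh0] at hjr
    linarith

theorem consumed_le_consumed {i j : ℕ} (hp : ∀ k ∈ Icc 1 j, ∀ n ∈ NI N Pi k, 0 ≤ p k n)
    (hij : i ≤ j) : consumed N Pi p i ≤ consumed N Pi p j :=
  sum_le_sum_of_subset_of_nonneg (Icc_subset_Icc_right hij) fun k hk _ => sum_nonneg (hp k hk)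

theorem harvested_eq_harvested {i j : ℕ} (hij : i ≤ j)
    (hzero : ∀ k ∈ Ioc i j, h k (Pi k) * q k = 0) : harvested h Pi q i = harvested h Pi q j :=
  sum_subset (Icc_subset_Icc_right hij) fun k hk hki =>
    hzero k (by simp only [mem_Icc, mem_Ioc] at hk hki ⊢; omega)

theorem sum_mul_transfer (s : Finset ℕ) (w q : ℕ → ℝ) (a b : ℕ) (δ : ℝ) :
    ∑ k ∈ s, w k * transfer q a b δ k =
      ∑ k ∈ s, w k * q k - (if a ∈ s then w a * δ else 0) + (if b ∈ s then w b * δ else 0) := by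
  simp only [transfer, mul_add, mul_sub, mul_ite, mul_zero, sum_add_distrib, sum_sub_distrib,
    sum_ite_eq']

theorem harvested_transfer (a b : ℕ) (δ : ℝ) (i : ℕ) :
    harvested h Pi (transfer q a b δ) i = harvested h Pi q i
      - (if a ∈ Icc 1 i then h a (Pi a) * δ else 0)
      + (if b ∈ Icc 1 i then h b (Pi b) * δ else 0) :=
  sum_mul_transfer _ (fun k => h k (Pi k)) q a b δ

theorem harvested_transfer_of_mem {a b i : ℕ} (δ : ℝ) (ha : a ∈ Icc 1 i) (hb : b ∈ Icc 1 i) :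
    harvested h Pi (transfer q a b δ) i =
      harvested h Pi q i + (h b (Pi b) - h a (Pi a)) * δ := by
  rw [harvested_transfer, if_pos ha, if_pos hb]
  ring

theorem harvested_le_harvested_transfer {a b : ℕ} {δ : ℝ} (i : ℕ) (hb : 1 ≤ b) (hba : b < a)
    (hh : h a (Pi a) ≤ h b (Pi b)) (hhb : 0 ≤ h b (Pi b)) (hδ : 0 ≤ δ) :
    harvested h Pi q i ≤ harvested h Pi (transfer q a b δ) i := by
  rw [harvested_transfer]
  split_ifs with ha' hb'
  · nlinarith
  · simp only [mem_Icc] at ha' hb'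
    omega
  · nlinarith
  · simp

theorem rateP_lt_rateP (hK : 0 < K) (hN : 0 < N) (hΓσ : 0 < Γσ) {p' : ℕ → ℕ → ℝ} {k₀ n₀ : ℕ}
    (hk₀ : k₀ ∈ Icc 1 K) (hn₀ : n₀ ∈ NI N Pi k₀) (hg : 0 < g k₀ n₀) (hp : 0 ≤ p k₀ n₀)
    (hlt : p k₀ n₀ < p' k₀ n₀) (heq : ∀ k n, (k, n) ≠ (k₀, n₀) → p' k n = p k n) :
    RateP K N g Γσ Pi p < RateP K N g Γσ Pi p' := by
  have hstrict : Real.logb 2 (1 + g k₀ n₀ * p k₀ n₀ / Γσ) <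
      Real.logb 2 (1 + g k₀ n₀ * p' k₀ n₀ / Γσ) :=
    Real.logb_lt_logb one_lt_two (by positivity) (by gcongr)
  have hterm : ∀ k n, Real.logb 2 (1 + g k n * p k n / Γσ) ≤
      Real.logb 2 (1 + g k n * p' k n / Γσ) := by
    intro k n
    rcases eq_or_ne (k, n) (k₀, n₀) with hkn | hkn
    · obtain ⟨rfl, rfl⟩ := Prod.mk.inj hkn
      exact hstrict.le
    · rw [heq k n hkn]
  have hKN : (0 : ℝ) < K * N := by positivity
  exact mul_lt_mul_of_pos_left (sum_lt_sum (fun k _ => sum_le_sum fun n _ => hterm k n)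
    ⟨k₀, hk₀, sum_lt_sum (fun n _ => hterm k₀ n) ⟨n₀, hn₀, hstrict⟩⟩) (by positivity)

theorem IsOptimalP.harvested_le (hopt : IsOptimalP K N h g Q ζ B1 Γσ Pi q p) (hK : 1 ≤ K)
    (hN : 1 ≤ N) (hζ : 0 < ζ) (hΓσ : 0 < Γσ) (hPiK : Pi K = 0) (hg : 0 < g K 1) {q' : ℕ → ℝ}
    (hq'0 : ∀ k ∈ Icc 1 K, 0 ≤ q' k) (hq'Pi : ∀ k ∈ Icc 1 K, Pi k = 0 → q' k = 0)
    (hq'sum : ∑ k ∈ Icc 1 K, q' k ≤ K * Q)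
    (hq'en : ∀ i ∈ Icc 1 (K - 1), consumed N Pi p i ≤ ζ * harvested h Pi q' (i - 1) + B1) :
    harvested h Pi q' (K - 1) ≤ harvested h Pi q (K - 1) := by
  obtain ⟨⟨-, -, hp0, -, hen⟩, hmax⟩ := hopt
  by_contra! hlt
  set ε := ζ * (harvested h Pi q' (K - 1) - harvested h Pi q (K - 1))
  have hε : 0 < ε := mul_pos hζ (sub_pos.2 hlt)
  have hK₀ : K ∈ Icc 1 K := by simp [hK]
  have h1 : 1 ∈ NI N Pi K := by simp [NI, hPiK, hN]
  set p' : ℕ → ℕ → ℝ := fun k n => p k n + if k = K ∧ n = 1 then ε else 0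
  have hcons : ∀ i ∈ Icc 1 K,
      consumed N Pi p' i = consumed N Pi p i + if i = K then ε else 0 := by
    intro i hi
    simp only [mem_Icc] at hi
    simp only [consumed, p', ite_and, sum_add_distrib, sum_ite_irrel, sum_ite_eq', sum_const_zero,
      mem_Icc, hK, true_and, h1, ↓reduceIte, add_right_inj]
    exact if_congr (by omega) rfl rfl
  have hfeas' : FeasibleP K N h Q ζ B1 Pi q' p' := by
    refine ⟨hq'0, hq'Pi, fun k hk n hn => ?_, hq'sum, fun i hi => ?_⟩
    · exact add_nonneg (hp0 k hk n hn) (by split_ifs <;> linarith)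
    · change consumed N Pi p' i ≤ ζ * harvested h Pi q' (i - 1) + B1
      rw [hcons i hi]
      rcases eq_or_ne i K with rfl | hiK
      · have : consumed N Pi p i ≤ ζ * harvested h Pi q (i - 1) + B1 := hen i hi
        rw [if_pos rfl]
        linarith
      · rw [if_neg hiK, add_zero]
        exact hq'en i (by simp only [mem_Icc] at hi ⊢; omega)
  have hrate := rateP_lt_rateP (g := g) (Γσ := Γσ) (p' := p') hK hN hΓσ hK₀ h1 hg
    (hp0 K hK₀ 1 h1) (by simp [p', hε]) (fun k n hkn => by simp_all [p'])
  linarith [hmax q' p' hfeas']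

theorem IsOptimalP.exists_consumed_gt_of_transfer (hopt : IsOptimalP K N h g Q ζ B1 Γσ Pi q p)
    (hK : 1 ≤ K) (hN : 1 ≤ N) (hζ : 0 < ζ) (hΓσ : 0 < Γσ) (hPiK : Pi K = 0) (hg : 0 < g K 1)
    {a b : ℕ} (ha : a ∈ Icc 1 (K - 1)) (hb : b ∈ Icc 1 (K - 1)) (hPia : Pi a ≠ 0)
    (hPib : Pi b ≠ 0) (hh : h a (Pi a) < h b (Pi b)) {δ : ℝ} (hδ : 0 < δ) (hδq : δ ≤ q a) :
    ∃ i ∈ Icc 1 (K - 1),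
      ζ * harvested h Pi (transfer q a b δ) (i - 1) + B1 < consumed N Pi p i := by
  obtain ⟨hq0, hqPi, -, hqsum, -⟩ := hopt.1
  have hsub : Icc 1 (K - 1) ⊆ Icc 1 K := Icc_subset_Icc_right (Nat.sub_le K 1)
  by_contra! hen
  have hle := hopt.harvested_le hK hN hζ hΓσ hPiK hg (q' := transfer q a b δ) ?_ ?_ ?_ hen
  · rw [harvested_transfer_of_mem δ ha hb] at hle
    nlinarith
  · intro k hk
    have := hq0 k hk
    have := hq0 b (hsub hb)
    simp only [transfer]
    split_ifs <;> subst_vars <;> linarith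
  · intro k hk hPik
    have hka : k ≠ a := by rintro rfl; exact hPia hPik
    have hkb : k ≠ b := by rintro rfl; exact hPib hPik
    simp [transfer, hka, hkb, hqPi k hk hPik]
  · have := sum_mul_transfer (Icc 1 K) (fun _ => 1) q a b δ
    simp only [one_mul] at this
    rw [this, if_pos (hsub ha), if_pos (hsub hb)]
    linarith

theorem IsOptimalP.mul_eq_zero_of_notMem_Dset (hopt : IsOptimalP K N h g Q ζ B1 Γσ Pi q p)
    (hK : 1 ≤ K) (hN : 1 ≤ N) (hζ : 0 < ζ) (hΓσ : 0 < Γσ) (hPiK : Pi K = 0) (hg : 0 < g K 1)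
    (hh0 : ∀ k, h k 0 = 0) (hhpos : ∀ k ∈ Icc 1 K, Pi k ≠ 0 → 0 < h k (Pi k))
    (hdist : ∀ k ∈ Icc 1 K, ∀ k' ∈ Icc 1 K,
      Pi k ≠ 0 → Pi k' ≠ 0 → k ≠ k' → h k (Pi k) ≠ h k' (Pi k'))
    {j : ℕ} (hj : j ∈ Icc 1 K) (hjD : j ∉ Dset K h Pi) : h j (Pi j) * q j = 0 := by
  by_cases hPij : Pi j = 0
  · rw [hPij, hh0, zero_mul]
  have hsub : Icc 1 (K - 1) ⊆ Icc 1 K := Icc_subset_Icc_right (Nat.sub_le K 1)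
  have hj' : j ∈ Icc 1 (K - 1) := by
    have : j ≠ K := by rintro rfl; exact hPij hPiK
    simp only [mem_Icc] at hj ⊢
    omega
  obtain ⟨r, hrD, hrj, hjr⟩ := exists_mem_Dset_ge hh0 hj' (hhpos j hj hPij)
  obtain ⟨hr, hPir, -⟩ := mem_Dset.1 hrD
  have hrj : r < j := lt_of_le_of_ne hrj (by rintro rfl; exact hjD hrD)
  have hjr : h j (Pi j) < h r (Pi r) :=
    lt_of_le_of_ne hjr (hdist j hj r (hsub hr) hPij hPir hrj.ne')
  rcases (hopt.1.1 j hj).eq_or_lt with hq | hq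
  · rw [← hq, mul_zero]
  obtain ⟨i, hi, hviol⟩ :=
    hopt.exists_consumed_gt_of_transfer hK hN hζ hΓσ hPiK hg hj' hr hPij hPir hjr hq le_rfl
  have hgain := harvested_le_harvested_transfer (q := q) (i - 1) (mem_Icc.1 hr).1 hrj hjr.le
    (hhpos r (hsub hr) hPir).le hq.le
  have hen : consumed N Pi p i ≤ ζ * harvested h Pi q (i - 1) + B1 := hopt.1.2.2.2.2 i (hsub hi)
  nlinarith

theorem IsOptimalP.eq_zero_of_slack (hopt : IsOptimalP K N h g Q ζ B1 Γσ Pi q p)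
    (hK : 1 ≤ K) (hN : 1 ≤ N) (hζ : 0 < ζ) (hΓσ : 0 < Γσ) (hPiK : Pi K = 0) (hg : 0 < g K 1)
    (hhpos : ∀ k ∈ Icc 1 K, Pi k ≠ 0 → 0 < h k (Pi k))
    (hoff : ∀ k ∈ Icc 1 K, k ∉ Dset K h Pi → h k (Pi k) * q k = 0)
    {a b : ℕ} (ha : a ∈ Dset K h Pi) (hb : b ∈ Dset K h Pi) (hab : a < b)
    (hconsec : ∀ k ∈ Dset K h Pi, k ≤ a ∨ b ≤ k)
    (hslack : consumed N Pi p b < ζ * harvested h Pi q (b - 1) + B1) : q a = 0 := by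
  obtain ⟨hq0, -, hp0, -, hen⟩ := hopt.1
  obtain ⟨haI, hPia, -⟩ := mem_Dset.1 ha
  obtain ⟨hbI, hPib, hbrec⟩ := mem_Dset.1 hb
  have hsub : Icc 1 (K - 1) ⊆ Icc 1 K := Icc_subset_Icc_right (Nat.sub_le K 1)
  have hha : 0 < h a (Pi a) := hhpos a (hsub haI) hPia
  have hhab : h a (Pi a) < h b (Pi b) := hbrec a (mem_Icc.1 haI).1 hab
  have hflat : ∀ i, a ≤ i → i ≤ b - 1 → harvested h Pi q i = harvested h Pi q (b - 1) := by
    refine fun i hai hib => harvested_eq_harvested hib fun k hk => hoff k ?_ fun hkD => ?_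
    · simp only [mem_Icc, mem_Ioc] at hk hbI ⊢
      omega
    · simp only [mem_Ioc] at hk
      rcases hconsec k hkD with hka | hbk <;> omega
  rcases (hq0 a (hsub haI)).eq_or_lt with hqa | hqa
  · exact hqa.symm
  exfalso
  set s := ζ * harvested h Pi q (b - 1) + B1 - consumed N Pi p b
  have hs : 0 < s := sub_pos.2 hslack
  set δ := min (q a) (s / (ζ * h a (Pi a)))
  have hδ : 0 < δ := lt_min hqa (by positivity)
  have hδs : ζ * h a (Pi a) * δ ≤ s :=
    calc ζ * h a (Pi a) * δ ≤ ζ * h a (Pi a) * (s / (ζ * h a (Pi a))) := by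
          gcongr
          exact min_le_right _ _
      _ = s := mul_div_cancel₀ _ (by positivity)
  obtain ⟨i, hi, hviol⟩ := hopt.exists_consumed_gt_of_transfer hK hN hζ hΓσ hPiK hg haI hbI
    hPia hPib hhab hδ (min_le_left _ _)
  have hen : consumed N Pi p i ≤ ζ * harvested h Pi q (i - 1) + B1 := hen i (hsub hi)
  rw [harvested_transfer] at hviol
  simp only [mem_Icc] at hviol hi haI hbI
  split_ifs at hviol with hai hbi
  · nlinarith [mul_pos hζ (mul_pos (sub_pos.2 hhab) hδ)]
  · -- between `a` and `b` nothing is harvested, so the slack at `b` pays for the loss `h_a δ`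
    have hcons : consumed N Pi p i ≤ consumed N Pi p b := consumed_le_consumed
      (fun k hk => hp0 k (hsub (Icc_subset_Icc_right (by omega) hk))) (by omega)
    rw [hflat (i - 1) (by omega) (by omega)] at hviol
    nlinarith
  · omega
  · linarith

theorem harvested_pred_eq {S : Finset ℕ} {M : ℕ} {d : ℕ → ℕ} {x : ℕ}
    (hd : StrictMonoOn d (Set.Iic (M + 1))) (hdsurj : ∀ k ∈ S, ∃ i, 1 ≤ i ∧ i ≤ M ∧ d i = k)
    (hdK : d (M + 1) = K) (hx1 : 1 ≤ x) (hxM : x ≤ M + 1)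
    (hoff : ∀ k ∈ Icc 1 K, k ∉ S → h k (Pi k) * q k = 0)
    (hqd : ∀ i, 1 ≤ i → i + 2 ≤ x → q (d i) = 0) :
    harvested h Pi q (d x - 1) = (if x = 1 then 1 else h (d (x - 1)) (Pi (d (x - 1)))) *
      (if x = 1 then 0 else q (d (x - 1))) := by
  have hxM' : x ∈ Set.Iic (M + 1) := hxM
  have hdx : d x ≤ K := hdK ▸ hd.monotoneOn hxM' Set.self_mem_Iic hxM
  have hzero : ∀ k ∈ Icc 1 (d x - 1), (x = 1 ∨ k ≠ d (x - 1)) → h k (Pi k) * q k = 0 := by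
    intro k hk hkx
    simp only [mem_Icc] at hk
    by_cases hkS : k ∈ S
    · obtain ⟨i, hi1, hix, rfl⟩ := exists_index_of_mem hd hdsurj hkS (by omega) hxM
      have : i ≠ x - 1 := by rintro rfl; omega
      rw [hqd i hi1 (by omega), mul_zero]
    · exact hoff k (by simp only [mem_Icc]; omega) hkS
  split_ifs with hx
  · rw [mul_zero]
    exact sum_eq_zero fun k hk => hzero k hk (Or.inl hx)
  · have hx' : x - 1 ∈ Set.Iic (M + 1) := Set.mem_Iic.2 (by omega)
    have hdx1 : d 0 < d (x - 1) := hd (Set.mem_Iic.2 (by omega)) hx' (by omega)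
    have hdx2 : d (x - 1) < d x := hd hx' hxM' (by omega)
    exact sum_eq_single_of_mem _ (by simp only [mem_Icc]; omega) fun k hk hne =>
      hzero k hk (Or.inr hne)

end Schedule

theorem stmt6_general
    (K N : ℕ) (hK : 2 ≤ K) (hN : 2 ≤ N)
    (h g : ℕ → ℕ → ℝ)
    (hpos : ∀ k ∈ Finset.Icc 1 K, ∀ n ∈ Finset.Icc 1 N, 0 < h k n ∧ 0 < g k n)
    (hzero : ∀ k, h k 0 = 0 ∧ g k 0 = 0)
    (Q ζ B1 Γσ : ℝ) (hζ : 0 < ζ) (hΓσ : 0 < Γσ)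
    (Pi : ℕ → ℕ) (hPiK : Pi K = 0) (hPiR : ∀ k ∈ Finset.Icc 1 K, Pi k ≤ N)
    (M : ℕ)
    (d : ℕ → ℕ) (hdK : d (M + 1) = K)
    (hdmono : ∀ i j, i < j → j ≤ M + 1 → d i < d j)
    (hdmem : ∀ i, 1 ≤ i → i ≤ M → d i ∈ Dset K h Pi)
    (hdsurj : ∀ k ∈ Dset K h Pi, ∃ i, 1 ≤ i ∧ i ≤ M ∧ d i = k)
    (hdist : ∀ k ∈ Finset.Icc 1 K, ∀ k' ∈ Finset.Icc 1 K,
      Pi k ≠ 0 → Pi k' ≠ 0 → k ≠ k' → h k (Pi k) ≠ h k' (Pi k'))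
    (q : ℕ → ℝ) (p : ℕ → ℕ → ℝ)
    (hfeas : FeasibleP K N h Q ζ B1 Pi q p)
    (hopt : ∀ q' p', FeasibleP K N h Q ζ B1 Pi q' p' →
      RateP K N g Γσ Pi p' ≤ RateP K N g Γσ Pi p)
    (x : ℕ) (hx1 : 1 ≤ x) (hxM : x ≤ M + 1)
    (hxeq : ∑ k ∈ Finset.Icc 1 (d x), ∑ n ∈ NI N Pi k, p k n =
      ζ * ∑ k ∈ Finset.Icc 1 (d x - 1), h k (Pi k) * q k + B1)
    (hxmin : ∀ i, 1 ≤ i → i < x →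
      ∑ k ∈ Finset.Icc 1 (d i), ∑ n ∈ NI N Pi k, p k n <
        ζ * ∑ k ∈ Finset.Icc 1 (d i - 1), h k (Pi k) * q k + B1)
    :
    (∀ k, 1 ≤ k → k ≤ x - 2 → q (d k) = 0)
    ∧ ∑ k ∈ Finset.Icc 1 (d x), ∑ n ∈ NI N Pi k, p k n =
        ζ * (if x = 1 then 1 else h (d (x - 1)) (Pi (d (x - 1)))) *
          (if x = 1 then 0 else q (d (x - 1))) + B1 := by
  have hK₀ : K ∈ Icc 1 K := mem_Icc.2 ⟨by omega, le_rfl⟩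
  have hg : 0 < g K 1 := (hpos K hK₀ 1 (mem_Icc.2 ⟨le_rfl, by omega⟩)).2
  have hh0 : ∀ k, h k 0 = 0 := fun k => (hzero k).1
  have hhpos : ∀ k ∈ Icc 1 K, Pi k ≠ 0 → 0 < h k (Pi k) := fun k hk hPik =>
    (hpos k hk (Pi k) (mem_Icc.2 ⟨Nat.one_le_iff_ne_zero.2 hPik, hPiR k hk⟩)).1
  have hmax : IsOptimalP K N h g Q ζ B1 Γσ Pi q p := ⟨hfeas, hopt⟩
  have hd : StrictMonoOn d (Set.Iic (M + 1)) := fun i _ j hj hij => hdmono i j hij hj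
  have hoff : ∀ k ∈ Icc 1 K, k ∉ Dset K h Pi → h k (Pi k) * q k = 0 := fun k hk hkD =>
    hmax.mul_eq_zero_of_notMem_Dset (by omega) (by omega) hζ hΓσ hPiK hg hh0 hhpos hdist hk hkD
  have hqd : ∀ m, 1 ≤ m → m + 2 ≤ x → q (d m) = 0 := fun m hm hmx =>
    hmax.eq_zero_of_slack (by omega) (by omega) hζ hΓσ hPiK hg hhpos hoff
      (hdmem m hm (by omega)) (hdmem (m + 1) (by omega) (by omega))
      (hdmono m (m + 1) (by omega) (by omega))
      (fun k hk => le_or_le_of_mem hd hdsurj hk (by omega)) (hxmin (m + 1) (by omega) (by omega))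
  refine ⟨fun k hk1 hk2 => hqd k hk1 (by omega), ?_⟩
  rw [hxeq, mul_assoc, ← harvested_pred_eq hd hdsurj hdK hx1 hxM hoff hqd]
  rfl

theorem stmt6
    (K N : ℕ) (hK : 2 ≤ K) (hN : 2 ≤ N)
    (h g : ℕ → ℕ → ℝ)
    (hpos : ∀ k ∈ Finset.Icc 1 K, ∀ n ∈ Finset.Icc 1 N, 0 < h k n ∧ 0 < g k n)
    (hzero : ∀ k, h k 0 = 0 ∧ g k 0 = 0)
    (Q ζ B1 Γσ : ℝ) (hQ : 0 < Q) (hζ : 0 < ζ) (hB1 : 0 ≤ B1) (hΓσ : 0 < Γσ)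
    (Pi : ℕ → ℕ) (hPiK : Pi K = 0) (hPiR : ∀ k ∈ Finset.Icc 1 K, Pi k ≤ N)
    (M : ℕ) (hM : M = (Dset K h Pi).card)
    (d : ℕ → ℕ) (hd0 : d 0 = 0) (hdK : d (M + 1) = K)
    (hdmono : ∀ i j, i < j → j ≤ M + 1 → d i < d j)
    (hdmem : ∀ i, 1 ≤ i → i ≤ M → d i ∈ Dset K h Pi)
    (hdsurj : ∀ k ∈ Dset K h Pi, ∃ i, 1 ≤ i ∧ i ≤ M ∧ d i = k)
    (hdist : ∀ k ∈ Finset.Icc 1 K, ∀ k' ∈ Finset.Icc 1 K,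
      Pi k ≠ 0 → Pi k' ≠ 0 → k ≠ k' → h k (Pi k) ≠ h k' (Pi k'))
    (q : ℕ → ℝ) (p : ℕ → ℕ → ℝ)
    (hfeas : FeasibleP K N h Q ζ B1 Pi q p)
    (hopt : ∀ q' p', FeasibleP K N h Q ζ B1 Pi q' p' →
      RateP K N g Γσ Pi p' ≤ RateP K N g Γσ Pi p)
    (x : ℕ) (hx1 : 1 ≤ x) (hxM : x ≤ M + 1)
    (hxeq : ∑ k ∈ Finset.Icc 1 (d x), ∑ n ∈ NI N Pi k, p k n =
      ζ * ∑ k ∈ Finset.Icc 1 (d x - 1), h k (Pi k) * q k + B1)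
    (hxmin : ∀ i, 1 ≤ i → i < x →
      ∑ k ∈ Finset.Icc 1 (d i), ∑ n ∈ NI N Pi k, p k n <
        ζ * ∑ k ∈ Finset.Icc 1 (d i - 1), h k (Pi k) * q k + B1)
    :
    (∀ k, 1 ≤ k → k ≤ x - 2 → q (d k) = 0)
    ∧ ∑ k ∈ Finset.Icc 1 (d x), ∑ n ∈ NI N Pi k, p k n =
        ζ * (if x = 1 then 1 else h (d (x - 1)) (Pi (d (x - 1)))) *
          (if x = 1 then 0 else q (d (x - 1))) + B1 :=
  stmt6_general K N hK hN h g hpos hzero Q ζ B1 Γσ hζ hΓσ Pi hPiK hPiR M d hdK hdmono hdmem hdsurj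
    hdist q p hfeas hopt x hx1 hxM hxeq hxmin
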